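/- Let G be a finite simple graph on vertex set {1,…,n}, let 0 < ε < 1, let e be an edge of the complete graph K_n, and let G' be the ε-sparsification of G. Then E[Z_e(G')²] ≤ ε⁵·Z_e(G)² + ε³·Z_e(G). -/

import Mathlib

/-!
On the event that `e` is retained, `Z_e(G')` is the sum, over the pairs `P = {f, g}` completing
`e` to a triangle of `G`, of the indicators that `f` and `g` are retained. Squaring and integrating,
`E[Z_e(G')²] = ∑_{P,Q} ε^|{e} ∪ P ∪ Q|`. Every such pair is `{vw, uw}` for `e = uv` and an apex
`w`, so two different pairs share no edge and the exponent is `3` if `P = Q` and `5` otherwise: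
`E[Z_e(G')²] = ε³ Z_e(G) + ε⁵ (Z_e(G)² - Z_e(G))`.
-/

open MeasureTheory ProbabilityTheory Real Filter

namespace RandomTriangles

/-- A graph on vertex set `Fin n`, given by edge indicators on unordered pairs
(values on diagonal pairs are never consulted). -/
abbrev Graph (n : ℕ) := Sym2 (Fin n) → Bool

/-- The edge set of the complete graph `K_n`: all non-diagonal unordered pairs. -/
noncomputable def edges (n : ℕ) : Finset (Sym2 (Fin n)) :=
  Finset.univ.filter fun e => ¬ e.IsDiag

/-- The unordered pairs `e, f, g` form the three edges of a triangle. -/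
def IsTriangleEdges {n : ℕ} (e f g : Sym2 (Fin n)) : Prop :=
  ∃ u v w : Fin n, u ≠ v ∧ v ≠ w ∧ u ≠ w ∧ e = s(u, v) ∧ f = s(v, w) ∧ g = s(u, w)

/-- `X G` is the number of triangles (3-cliques) of `G`. -/
noncomputable def X {n : ℕ} (G : Graph n) : ℕ :=
  Nat.card {T : Finset (Fin n) // T.card = 3 ∧ ∀ u ∈ T, ∀ v ∈ T, u ≠ v → G s(u, v) = true}

/-- `Y G e` is the number of (unordered) sets `{f, g}` of edges of `G` such that
`{e, f, g}` is a triangle. -/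
noncomputable def Y {n : ℕ} (G : Graph n) (e : Sym2 (Fin n)) : ℕ :=
  Nat.card {P : Sym2 (Sym2 (Fin n)) //
    ∃ f g, P = s(f, g) ∧ G f = true ∧ G g = true ∧ IsTriangleEdges e f g}

/-- `Z G e = Y G e` if `e` is an edge of `G`, and `0` otherwise. -/
noncomputable def Z {n : ℕ} (G : Graph n) (e : Sym2 (Fin n)) : ℕ :=
  if G e = true then Y G e else 0

/-- The Bernoulli measure with parameter `p` on `Bool`. -/
noncomputable def bern (p : ℝ) : Measure Bool :=
  ENNReal.ofReal p • Measure.dirac true + ENNReal.ofReal (1 - p) • Measure.dirac false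

/-- The product of independent Bernoulli(`p`) coin flips, one for each unordered pair
of vertices.  Under this measure, the identity map `ω ↦ ω` is the random graph `G(n,p)`,
and `ω ↦ sparsify G ω` is the `p`-sparsification of `G`. -/
noncomputable def edgeMeasure (n : ℕ) (p : ℝ) : Measure (Sym2 (Fin n) → Bool) :=
  Measure.pi fun _ => bern p

/-- The sparsification of `G` determined by the retention choices `ω`. -/
def sparsify {n : ℕ} (G : Graph n) (ω : Sym2 (Fin n) → Bool) : Graph n :=
  fun e => G e && ω e

/-- `G` with the edge `e` removed. -/
def removeEdge {n : ℕ} (G : Graph n) (e : Sym2 (Fin n)) : Graph n :=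
  fun f => if f = e then false else G f

open scoped Classical in
/-- The unordered pairs `{f, g}` of edges of `G` forming a triangle together with `e`. -/
noncomputable def trianglePairs {n : ℕ} (G : Graph n) (e : Sym2 (Fin n)) :
    Finset (Sym2 (Sym2 (Fin n))) :=
  Finset.univ.filter fun P => ∃ f g, P = s(f, g) ∧ G f = true ∧ G g = true ∧
    IsTriangleEdges e f g

/-- `pairCost h` sends the unordered pair `{f, g}` to `2 * h f + 2 * h g + 2`. -/
noncomputable def pairCost {n : ℕ} (h : Sym2 (Fin n) → ℝ) : Sym2 (Sym2 (Fin n)) → ℝ :=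
  Sym2.lift ⟨fun f g => 2 * h f + 2 * h g + 2, fun f g => by ring⟩

open Finset

lemma isProbabilityMeasure_bern {p : ℝ} (h0 : 0 ≤ p) (h1 : p ≤ 1) :
    IsProbabilityMeasure (bern p) :=
  ⟨by simp [bern, ← ENNReal.ofReal_add h0 (sub_nonneg.mpr h1)]⟩

lemma bern_singleton_true (p : ℝ) : bern p {true} = ENNReal.ofReal p := by
  simp [bern]

section retained

variable {ι : Type*}

def retained (S : Finset ι) : Set (ι → Bool) :=
  (S : Set ι).pi fun _ => {true}

lemma mem_retained {S : Finset ι} {ω : ι → Bool} : ω ∈ retained S ↔ ∀ i ∈ S, ω i = true :=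
  Set.mem_pi

lemma retained_union [DecidableEq ι] (S T : Finset ι) :
    retained (S ∪ T) = retained S ∩ retained T := by
  rw [retained, coe_union, Set.union_pi, retained, retained]

lemma measureReal_pi_bern_retained [Fintype ι] {p : ℝ} (h0 : 0 ≤ p) (h1 : p ≤ 1)
    (S : Finset ι) : (Measure.pi fun _ : ι => bern p).real (retained S) = p ^ #S := by
  have := isProbabilityMeasure_bern h0 h1
  simp [measureReal_def, retained, bern_singleton_true, ENNReal.toReal_ofReal h0]

end retained

section trianglePairs

variable {n : ℕ} {G : Graph n} {e : Sym2 (Fin n)}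

lemma Y_eq_card_trianglePairs :
    Y G e = #(trianglePairs G e) := by
  classical
  rw [Y, Nat.card_eq_fintype_card, Fintype.card_subtype, trianglePairs]

lemma trianglePairs_sparsify (ω : Sym2 (Fin n) → Bool) :
    trianglePairs (sparsify G ω) e = {P ∈ trianglePairs G e | ∀ f ∈ P, ω f = true} := by
  classical
  ext P
  simp only [trianglePairs, mem_filter, mem_univ, true_and, sparsify, Bool.and_eq_true]
  constructor
  · rintro ⟨f, g, rfl, ⟨hGf, hωf⟩, ⟨hGg, hωg⟩, htri⟩
    refine ⟨⟨f, g, rfl, hGf, hGg, htri⟩, fun x hx => ?_⟩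
    rcases Sym2.mem_iff.mp hx with rfl | rfl <;> assumption
  · rintro ⟨⟨f, g, rfl, hGf, hGg, htri⟩, hω⟩
    exact ⟨f, g, rfl, ⟨hGf, hω f (Sym2.mem_mk_left f g)⟩,
      ⟨hGg, hω g (Sym2.mem_mk_right f g)⟩, htri⟩

lemma exists_apex_of_mem_trianglePairs {P : Sym2 (Sym2 (Fin n))} {u v : Fin n}
    (hP : P ∈ trianglePairs G s(u, v)) : ∃ w, w ≠ u ∧ w ≠ v ∧ P = s(s(v, w), s(u, w)) := by
  simp only [trianglePairs, mem_filter, mem_univ, true_and] at hP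
  obtain ⟨-, -, rfl, -, -, u₀, v₀, w, -, hvw, huw, he, rfl, rfl⟩ := hP
  rcases Sym2.eq_iff.mp he with ⟨rfl, rfl⟩ | ⟨rfl, rfl⟩
  · exact ⟨w, huw.symm, hvw.symm, rfl⟩
  · exact ⟨w, hvw.symm, huw.symm, Sym2.eq_swap⟩

lemma exists_ne_eq_of_mem_trianglePairs {P : Sym2 (Sym2 (Fin n))}
    (hP : P ∈ trianglePairs G e) :
    ∃ u v, u ≠ v ∧ e = s(u, v) := by
  simp only [trianglePairs, mem_filter, mem_univ, true_and] at hP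
  obtain ⟨-, -, -, -, -, u, v, -, huv, -, -, he, -⟩ := hP
  exact ⟨u, v, huv, he⟩

lemma card_insert_union_insert_toFinset {P Q : Sym2 (Sym2 (Fin n))}
    (hP : P ∈ trianglePairs G e) (hQ : Q ∈ trianglePairs G e) :
    #(insert e P.toFinset ∪ insert e Q.toFinset) = if P = Q then 3 else 5 := by
  obtain ⟨u, v, huv, rfl⟩ := exists_ne_eq_of_mem_trianglePairs hP
  obtain ⟨w, hwu, hwv, rfl⟩ := exists_apex_of_mem_trianglePairs hP
  obtain ⟨w', hw'u, hw'v, rfl⟩ := exists_apex_of_mem_trianglePairs hQ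
  by_cases hw : w = w'
  · subst hw
    simp [Sym2.toFinset_mk_eq, huv, hwu, huv.symm, hwu.symm, hwv.symm]
  · simp [Sym2.toFinset_mk_eq, huv, hwu, hwv, hw'u, hw'v, huv.symm, hwu.symm, hwv.symm,
      hw'u.symm, hw'v.symm, hw, Ne.symm hw]

lemma Z_sparsify_eq_sum_indicator (hGe : G e = true) (ω : Sym2 (Fin n) → Bool) :
    (Z (sparsify G ω) e : ℝ) =
      ∑ P ∈ trianglePairs G e, (retained (insert e P.toFinset)).indicator 1 ω := by
  classical
  by_cases hωe : ω e = true
  · rw [Z, if_pos (by simp [sparsify, hGe, hωe]), Y_eq_card_trianglePairs,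
      trianglePairs_sparsify, card_filter, Nat.cast_sum]
    refine sum_congr rfl fun P _ => ?_
    simp [Set.indicator_apply, mem_retained, Sym2.mem_toFinset, hωe]
  · simp [Z, sparsify, hωe, mem_retained]

lemma Z_sparsify_sq_eq_sum_indicator (hGe : G e = true) (ω : Sym2 (Fin n) → Bool) :
    (Z (sparsify G ω) e : ℝ) ^ 2 = ∑ P ∈ trianglePairs G e, ∑ Q ∈ trianglePairs G e,
      (retained (insert e P.toFinset ∪ insert e Q.toFinset)).indicator 1 ω := by
  simp_rw [Z_sparsify_eq_sum_indicator hGe, sq, sum_mul_sum, retained_union,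
    Set.inter_indicator_one, Pi.mul_apply]

lemma integral_Z_sparsify_sq {ε : ℝ} (h0 : 0 ≤ ε) (h1 : ε ≤ 1) (hGe : G e = true) :
    ∫ ω, (Z (sparsify G ω) e : ℝ) ^ 2 ∂(edgeMeasure n ε) =
      ∑ P ∈ trianglePairs G e, ∑ Q ∈ trianglePairs G e, ε ^ (if P = Q then 3 else 5) := by
  have := isProbabilityMeasure_bern h0 h1
  simp_rw [Z_sparsify_sq_eq_sum_indicator hGe, edgeMeasure]
  rw [integral_finsetSum _ fun P _ => Integrable.of_finite]
  refine sum_congr rfl fun P hP => ?_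
  rw [integral_finsetSum _ fun Q _ => Integrable.of_finite]
  refine sum_congr rfl fun Q hQ => ?_
  rw [integral_indicator_one (Set.toFinite _).measurableSet,
    measureReal_pi_bern_retained h0 h1, card_insert_union_insert_toFinset hP hQ]

end trianglePairs

lemma sum_sum_pow_ite_le {α : Type*} [DecidableEq α] (T : Finset α) {ε : ℝ} (h0 : 0 ≤ ε) :
    ∑ P ∈ T, ∑ Q ∈ T, ε ^ (if P = Q then 3 else 5) ≤ ε ^ 5 * #T ^ 2 + ε ^ 3 * #T := by
  calc ∑ P ∈ T, ∑ Q ∈ T, ε ^ (if P = Q then 3 else 5)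
      ≤ ∑ P ∈ T, ∑ Q ∈ T, (ε ^ 5 + if P = Q then ε ^ 3 else 0) := by
        gcongr with P _ Q _
        split_ifs
        · linarith [pow_nonneg h0 5]
        · linarith
    _ = ε ^ 5 * #T ^ 2 + ε ^ 3 * #T := by
        simp [sum_add_distrib]
        ring

theorem expected_Z_sq_sparsify_le_general (n : ℕ) (G : Graph n) (ε : ℝ)
    (h0 : 0 < ε) (h1 : ε < 1) (e : Sym2 (Fin n)) :
    ∫ ω, (Z (sparsify G ω) e : ℝ) ^ 2 ∂(edgeMeasure n ε)
      ≤ ε ^ 5 * (Z G e : ℝ) ^ 2 + ε ^ 3 * (Z G e : ℝ) := by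
  by_cases hGe : G e = true
  · rw [integral_Z_sparsify_sq h0.le h1.le hGe, Z, if_pos hGe, Y_eq_card_trianglePairs]
    exact sum_sum_pow_ite_le _ h0.le
  · simp [Z, sparsify, hGe]

/-- `E[Z e (G')²] ≤ ε⁵ * (Z G e)² + ε³ * Z G e` for the
`ε`-sparsification `G'` of `G`. -/
theorem expected_Z_sq_sparsify_le (n : ℕ) (G : Graph n) (ε : ℝ)
    (h0 : 0 < ε) (h1 : ε < 1) (e : Sym2 (Fin n)) (he : ¬ e.IsDiag) :
    ∫ ω, (Z (sparsify G ω) e : ℝ) ^ 2 ∂(edgeMeasure n ε)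
      ≤ ε ^ 5 * (Z G e : ℝ) ^ 2 + ε ^ 3 * (Z G e : ℝ) :=
  expected_Z_sq_sparsify_le_general n G ε h0 h1 e

end RandomTriangles
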